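/- For every N ≥ 1, the set of wavevectors compatible with some sublattice of ℤ² of index N equals {(2π l₁/N, 2π l₂/N) : 0 ≤ l₁, l₂ < N}. Precisely: q ∈ (ℝ/2πℤ)² lies in the dual (Brillouin zone) of some finite-index subgroup P ≤ ℤ² with [ℤ² : P] = N if and only if q = (2π l₁/N, 2π l₂/N) for some integers 0 ≤ l₁, l₂ < N. -/

import Mathlib

open Real

/-- `q` is compatible with the subgroup `P` of `ℤ²` if `⟨q, p⟩ ∈ 2πℤ` for all `p ∈ P`. -/
def Compatible (q : ℝ × ℝ) (P : AddSubgroup (ℤ × ℤ)) : Prop :=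
  ∀ p ∈ P, ∃ m : ℤ, q.1 * p.1 + q.2 * p.2 = 2 * π * m

/-!
A subgroup of index `N` contains `N • ℤ²`, so every wavevector compatible with it satisfies
`N q ∈ 2πℤ²`. Conversely, if `N q = 2π (a, b)`, write `(a, b) = d (A, B)` with `A, B` coprime:
the form `p ↦ A p₁ + B p₂ mod N` maps `ℤ²` onto `ℤ/N`, so its kernel has index `N`, and on
that kernel `⟨q, p⟩ = 2π d (A p₁ + B p₂) / N ∈ 2πℤ`.
-/

theorem Int.exists_isCoprime_mul (a b : ℤ) :
    ∃ d A B : ℤ, IsCoprime A B ∧ a = d * A ∧ b = d * B := by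
  rcases (Int.gcd a b).eq_zero_or_pos with h | h
  · obtain ⟨rfl, rfl⟩ := Int.gcd_eq_zero_iff.mp h
    exact ⟨0, 1, 0, isCoprime_one_left, by simp, by simp⟩
  · obtain ⟨g, A, B, -, hAB, rfl, rfl⟩ := Int.exists_gcd_one' h
    exact ⟨g, A, B, Int.isCoprime_iff_gcd_eq_one.mpr hAB, mul_comm _ _, mul_comm _ _⟩

def linearFormMod (N : ℕ) (A B : ℤ) : ℤ × ℤ →+ ZMod N :=
  (Int.castAddHom (ZMod N)).comp (A • AddMonoidHom.fst ℤ ℤ + B • AddMonoidHom.snd ℤ ℤ)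

@[simp]
theorem linearFormMod_apply (N : ℕ) (A B : ℤ) (p : ℤ × ℤ) :
    linearFormMod N A B p = ((A * p.1 + B * p.2 : ℤ) : ZMod N) := by
  simp [linearFormMod]

theorem linearFormMod_surjective (N : ℕ) {A B : ℤ} (h : IsCoprime A B) :
    Function.Surjective (linearFormMod N A B) := by
  obtain ⟨u, v, huv⟩ := h
  intro x
  obtain ⟨z, rfl⟩ := ZMod.intCast_surjective x
  exact ⟨(u * z, v * z), by rw [linearFormMod_apply]; congr 1; linear_combination z * huv⟩

theorem AddMonoidHom.index_ker_of_surjective_zmod {G : Type*} [AddGroup G] {N : ℕ}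
    {f : G →+ ZMod N} (hf : Function.Surjective f) : f.ker.index = N := by
  rw [AddSubgroup.index_ker, AddMonoidHom.range_eq_top.mpr hf, AddSubgroup.card_top,
    Nat.card_zmod]

theorem exists_index_eq_forall_dvd (N : ℕ) (a b : ℤ) :
    ∃ P : AddSubgroup (ℤ × ℤ), P.index = N ∧ ∀ p ∈ P, (N : ℤ) ∣ a * p.1 + b * p.2 := by
  obtain ⟨d, A, B, hAB, rfl, rfl⟩ := Int.exists_isCoprime_mul a b
  refine ⟨(linearFormMod N A B).ker,
    AddMonoidHom.index_ker_of_surjective_zmod (linearFormMod_surjective N hAB), fun p hp => ?_⟩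
  rw [AddMonoidHom.mem_ker, linearFormMod_apply, ZMod.intCast_zmod_eq_zero_iff_dvd] at hp
  rw [show d * A * p.1 + d * B * p.2 = d * (A * p.1 + B * p.2) by ring]
  exact dvd_mul_of_dvd_right hp d

theorem exists_mul_eq_of_compatible {N : ℕ} {q : ℝ × ℝ} {P : AddSubgroup (ℤ × ℤ)}
    (hP : P.index = N) (hq : Compatible q P) :
    ∃ a b : ℤ, q.1 * N = 2 * π * a ∧ q.2 * N = 2 * π * b := by
  obtain ⟨a, ha⟩ := hq _ (P.nsmul_index_mem (1, 0))
  obtain ⟨b, hb⟩ := hq _ (P.nsmul_index_mem (0, 1))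
  exact ⟨a, b, by simpa [hP] using ha, by simpa [hP] using hb⟩

theorem compatible_of_forall_dvd {N : ℕ} (hN : N ≠ 0) {q : ℝ × ℝ} {P : AddSubgroup (ℤ × ℤ)}
    {a b : ℤ} (ha : q.1 * N = 2 * π * a) (hb : q.2 * N = 2 * π * b)
    (hP : ∀ p ∈ P, (N : ℤ) ∣ a * p.1 + b * p.2) : Compatible q P := by
  intro p hp
  obtain ⟨m, hm⟩ := hP p hp
  refine ⟨m, mul_right_cancel₀ (Nat.cast_ne_zero.mpr hN : (N : ℝ) ≠ 0) ?_⟩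
  have hmR : (a : ℝ) * p.1 + b * p.2 = N * m := by exact_mod_cast hm
  linear_combination p.1 * ha + p.2 * hb + 2 * π * hmR

theorem exists_index_eq_compatible_iff {N : ℕ} (hN : N ≠ 0) (q : ℝ × ℝ) :
    (∃ P : AddSubgroup (ℤ × ℤ), P.index = N ∧ Compatible q P) ↔
      ∃ a b : ℤ, q.1 * N = 2 * π * a ∧ q.2 * N = 2 * π * b := by
  constructor
  · rintro ⟨P, hP, hq⟩
    exact exists_mul_eq_of_compatible hP hq
  · rintro ⟨a, b, ha, hb⟩
    obtain ⟨P, hP, hdvd⟩ := exists_index_eq_forall_dvd N a b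
    exact ⟨P, hP, compatible_of_forall_dvd hN ha hb hdvd⟩

theorem exists_mul_eq_two_pi_mul_iff {N : ℕ} (hN : N ≠ 0) (x : ℝ) :
    (∃ a : ℤ, x * N = 2 * π * a) ↔
      ∃ l : ℤ, 0 ≤ l ∧ l < N ∧ ∃ m : ℤ, x = 2 * π * l / N + 2 * π * m := by
  have hNR : (N : ℝ) ≠ 0 := Nat.cast_ne_zero.mpr hN
  have hNZ : (0 : ℤ) < N := by omega
  constructor
  · rintro ⟨a, ha⟩
    refine ⟨a % N, Int.emod_nonneg a hNZ.ne', Int.emod_lt_of_pos a hNZ, a / N,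
      mul_right_cancel₀ hNR ?_⟩
    have hdiv : ((a % N : ℤ) : ℝ) + N * (a / N : ℤ) = a := by
      exact_mod_cast Int.emod_add_mul_ediv a N
    rw [ha, ← hdiv]
    field_simp
  · rintro ⟨l, -, -, m, rfl⟩
    exact ⟨l + N * m, by push_cast; field_simp⟩

theorem dual_of_index_N_subgroups (N : ℕ) (hN : 1 ≤ N) (q : ℝ × ℝ) :
    (∃ P : AddSubgroup (ℤ × ℤ), P.index = N ∧ Compatible q P) ↔
      ∃ l₁ l₂ : ℤ, 0 ≤ l₁ ∧ l₁ < N ∧ 0 ≤ l₂ ∧ l₂ < N ∧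
        ∃ m₁ m₂ : ℤ, q.1 = 2 * π * l₁ / N + 2 * π * m₁ ∧
          q.2 = 2 * π * l₂ / N + 2 * π * m₂ := by
  have hN0 : N ≠ 0 := Nat.one_le_iff_ne_zero.mp hN
  have h₁ := exists_mul_eq_two_pi_mul_iff hN0 q.1
  have h₂ := exists_mul_eq_two_pi_mul_iff hN0 q.2
  rw [exists_index_eq_compatible_iff hN0]
  constructor
  · rintro ⟨a, b, ha, hb⟩
    obtain ⟨l₁, hl₁, hl₁N, m₁, hm₁⟩ := h₁.mp ⟨a, ha⟩
    obtain ⟨l₂, hl₂, hl₂N, m₂, hm₂⟩ := h₂.mp ⟨b, hb⟩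
    exact ⟨l₁, l₂, hl₁, hl₁N, hl₂, hl₂N, m₁, m₂, hm₁, hm₂⟩
  · rintro ⟨l₁, l₂, hl₁, hl₁N, hl₂, hl₂N, m₁, m₂, hm₁, hm₂⟩
    obtain ⟨a, ha⟩ := h₁.mpr ⟨l₁, hl₁, hl₁N, m₁, hm₁⟩
    obtain ⟨b, hb⟩ := h₂.mpr ⟨l₂, hl₂, hl₂N, m₂, hm₂⟩
    exact ⟨a, b, ha, hb⟩
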